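/- For a primitive vector v ∈ ℤ³, if a and b are a ℤ-basis of the lattice v^⊥ = {x ∈ ℤ³ : x · v = 0}, then a × b = ±v; in particular the area of the fundamental parallelogram of v^⊥ equals ‖v‖. -/

import Mathlib

/-!
Since `a, b ⟂ v`, the vector triple product gives `(a × b) × v = 0`, so `a × b = k v` with
`k = c · (a × b)` for a Bézout vector `c`, `c · v = 1`. For any `u, w` the vectors `u × v` and
`w × v` lie in `v^⊥`, hence are integral combinations of `a, b`, so
`(u × v) × (w × v) = [u, w, v] v` is an integral multiple of `a × b = k v`. Taking `u, w` among
the standard basis vectors shows that `k` divides every coordinate of `v`, so `k = ±1`.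
-/

def dot3 (a b : Fin 3 → ℤ) : ℤ := a 0 * b 0 + a 1 * b 1 + a 2 * b 2

def cross3 (a b : Fin 3 → ℤ) : Fin 3 → ℤ :=
  ![a 1 * b 2 - a 2 * b 1, a 2 * b 0 - a 0 * b 2, a 0 * b 1 - a 1 * b 0]

def Primitive (v : Fin 3 → ℤ) : Prop := Int.gcd (Int.gcd (v 0) (v 1)) (v 2) = 1

open Matrix

theorem dot3_eq_dotProduct (a b : Fin 3 → ℤ) : dot3 a b = a ⬝ᵥ b :=
  (vec3_dotProduct a b).symm

theorem cross3_eq_crossProduct (a b : Fin 3 → ℤ) : cross3 a b = a ⨯₃ b := rfl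

section CrossProduct

variable {R : Type*} [CommRing R]

theorem smul_add_smul_cross_smul_add_smul (m n m' n' : R) (a b : Fin 3 → R) :
    (m • a + n • b) ⨯₃ (m' • a + n' • b) = (m * n' - n * m') • a ⨯₃ b := by
  simp only [map_add, map_smul, LinearMap.add_apply, LinearMap.smul_apply, cross_self,
    ← cross_anticomm b a, smul_zero, zero_add, add_zero, smul_neg, smul_smul]
  module

theorem cross_cross_cross_right (u v w : Fin 3 → R) :
    (u ⨯₃ v) ⨯₃ (w ⨯₃ v) = (u ⬝ᵥ w ⨯₃ v) • v := by
  rw [cross_cross_eq_smul_sub_smul, dot_cross_self, zero_smul, sub_zero]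

theorem eq_smul_of_cross_eq_zero {c v w : Fin 3 → R} (hc : c ⬝ᵥ v = 1) (h : w ⨯₃ v = 0) :
    w = (c ⬝ᵥ w) • v := by
  have := cross_cross_eq_smul_sub_smul' c w v
  rwa [h, map_zero, hc, one_smul, dotProduct_comm, eq_comm, sub_eq_zero] at this

theorem cross_eq_smul_of_dotProduct_eq_zero {a b c v : Fin 3 → R} (hc : c ⬝ᵥ v = 1)
    (ha : a ⬝ᵥ v = 0) (hb : b ⬝ᵥ v = 0) : a ⨯₃ b = (c ⬝ᵥ a ⨯₃ b) • v :=
  eq_smul_of_cross_eq_zero hc <| by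
    rw [cross_cross_eq_smul_sub_smul, ha, hb, zero_smul, zero_smul, sub_zero]

theorem dvd_dotProduct_cross_of_spans_perp {a b c v : Fin 3 → R} {k : R} (hc : c ⬝ᵥ v = 1)
    (hk : a ⨯₃ b = k • v)
    (hspan : ∀ x : Fin 3 → R, x ⬝ᵥ v = 0 → ∃ m n : R, x = m • a + n • b) (u w : Fin 3 → R) :
    k ∣ v ⬝ᵥ u ⨯₃ w := by
  have hperp (x : Fin 3 → R) : x ⨯₃ v ⬝ᵥ v = 0 := by rw [dotProduct_comm, dot_cross_self]
  obtain ⟨m, n, hu⟩ := hspan _ (hperp u)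
  obtain ⟨m', n', hw⟩ := hspan _ (hperp w)
  have h : (u ⬝ᵥ w ⨯₃ v) • v = ((m * n' - n * m') * k) • v := by
    rw [← cross_cross_cross_right, hu, hw, smul_add_smul_cross_smul_add_smul, hk, smul_smul]
  have h' := congrArg (c ⬝ᵥ ·) h
  simp only [dotProduct_smul, hc, smul_eq_mul, mul_one] at h'
  rw [← triple_product_permutation w v u, ← triple_product_permutation u w v, h']
  exact dvd_mul_left k _

end CrossProduct

theorem Primitive.exists_dotProduct_eq_one {v : Fin 3 → ℤ} (hv : Primitive v) :
    ∃ c : Fin 3 → ℤ, c ⬝ᵥ v = 1 := by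
  obtain ⟨x, y, hxy⟩ := Int.isCoprime_iff_gcd_eq_one.mpr hv
  refine ⟨![x * Int.gcdA (v 0) (v 1), x * Int.gcdB (v 0) (v 1), y], ?_⟩
  rw [Int.gcd_eq_gcd_ab] at hxy
  simp only [vec3_dotProduct, cons_val]
  linear_combination hxy

theorem Primitive.isUnit_of_forall_dvd {v : Fin 3 → ℤ} (hv : Primitive v) {k : ℤ}
    (h : ∀ i, k ∣ v i) : IsUnit k := by
  have := Int.dvd_coe_gcd (Int.dvd_coe_gcd (h 0) (h 1)) (h 2)
  rw [hv, Nat.cast_one] at this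
  exact isUnit_of_dvd_one this

theorem exists_cross_eq_single (i : Fin 3) :
    ∃ u w : Fin 3 → ℤ, u ⨯₃ w = Pi.single i 1 := by
  fin_cases i
  · exact ⟨![0, 1, 0], ![0, 0, 1], by ext j; fin_cases j <;> simp [cross_apply]⟩
  · exact ⟨![0, 0, 1], ![1, 0, 0], by ext j; fin_cases j <;> simp [cross_apply]⟩
  · exact ⟨![1, 0, 0], ![0, 1, 0], by ext j; fin_cases j <;> simp [cross_apply]⟩

theorem perp_fundamental_area (v a b : Fin 3 → ℤ) (hv : Primitive v)
    (ha : dot3 a v = 0) (hb : dot3 b v = 0)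
    (hspan : ∀ x : Fin 3 → ℤ, dot3 x v = 0 → ∃ m n : ℤ, x = m • a + n • b) :
    (cross3 a b = v ∨ cross3 a b = -v) ∧
      dot3 (cross3 a b) (cross3 a b) = dot3 v v := by
  simp only [dot3_eq_dotProduct, cross3_eq_crossProduct] at ha hb hspan ⊢
  obtain ⟨c, hc⟩ := hv.exists_dotProduct_eq_one
  have hk := cross_eq_smul_of_dotProduct_eq_zero hc ha hb
  have hunit : IsUnit (c ⬝ᵥ a ⨯₃ b) := hv.isUnit_of_forall_dvd fun i => by
    obtain ⟨u, w, huw⟩ := exists_cross_eq_single i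
    simpa [huw] using dvd_dotProduct_cross_of_spans_perp hc hk hspan u w
  rcases Int.isUnit_iff.mp hunit with h | h <;> rw [hk, h] <;> simp
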